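/- Let u_c ∈ H³(ℝⁿ) with sup_{c≥1} ‖u_c‖_{H³(ℝⁿ)} = M < ∞. Then ‖(−Δ + 1 − P_c(D))u_c‖_{H^{−1}(ℝⁿ)} ≤ C·M/c² for a constant C independent of c ≥ 1, where P_c(D) is the Fourier multiplier with symbol P_c(ξ) = sqrt(c²|ξ|² + c⁴/4) − c²/2 + 1. -/

import Mathlib

open MeasureTheory
open scoped FourierTransform

/-- The inhomogeneous Sobolev norm `‖u‖_{H^s(ℝⁿ)}`, defined on the Fourier side. -/
noncomputable def sobolevNorm (n : ℕ) (s : ℝ) (u : EuclideanSpace ℝ (Fin n) → ℂ) : ℝ :=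
  Real.sqrt (((2 * Real.pi) ^ n)⁻¹ *
    ∫ ξ : EuclideanSpace ℝ (Fin n), (1 + ‖ξ‖ ^ 2) ^ s * ‖𝓕 u ξ‖ ^ 2)

/-- Membership in the Sobolev space `H^s(ℝⁿ)`. -/
def MemSobolev (n : ℕ) (s : ℝ) (u : EuclideanSpace ℝ (Fin n) → ℂ) : Prop :=
  Integrable (fun ξ : EuclideanSpace ℝ (Fin n) => (1 + ‖ξ‖ ^ 2) ^ s * ‖𝓕 u ξ‖ ^ 2)

/-!
The symbol of `-Δ + 1 - P_c(D)` is `r + c²/2 - √(c²r + c⁴/4)` with `r = |ξ|²`; rationalizing it gives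
`r² / (r + c²/2 + √(c²r + c⁴/4))`, whose denominator is at least `c²`. Hence the symbol lies in
`[0, |ξ|⁴/c²]`, so `⟨ξ⟩⁻² |symbol|² ≤ c⁻⁴ ⟨ξ⟩⁶`, and the `H⁻¹` norm on the Fourier side is at most
`c⁻²` times the `H³` norm.
-/

/-- The symbol `P_c(ξ)` as a function of `r = |ξ|²`. -/
noncomputable def symbolP (c r : ℝ) : ℝ :=
  Real.sqrt (c ^ 2 * r + c ^ 4 / 4) - c ^ 2 / 2 + 1

section Symbol

variable {c r : ℝ}

lemma add_one_sub_symbolP_eq (hc : c ≠ 0) (hr : 0 ≤ r) :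
    r + 1 - symbolP c r = r ^ 2 / (r + c ^ 2 / 2 + Real.sqrt (c ^ 2 * r + c ^ 4 / 4)) := by
  have hsq : Real.sqrt (c ^ 2 * r + c ^ 4 / 4) ^ 2 = c ^ 2 * r + c ^ 4 / 4 :=
    Real.sq_sqrt (by positivity)
  have hden : 0 < r + c ^ 2 / 2 + Real.sqrt (c ^ 2 * r + c ^ 4 / 4) := by positivity
  rw [symbolP, eq_div_iff hden.ne']
  linear_combination -hsq

lemma add_one_sub_symbolP_nonneg (hc : c ≠ 0) (hr : 0 ≤ r) : 0 ≤ r + 1 - symbolP c r := by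
  rw [add_one_sub_symbolP_eq hc hr]
  positivity

lemma add_one_sub_symbolP_le (hc : c ≠ 0) (hr : 0 ≤ r) : r + 1 - symbolP c r ≤ r ^ 2 / c ^ 2 := by
  rw [add_one_sub_symbolP_eq hc hr]
  have hsqrt : c ^ 2 / 2 ≤ Real.sqrt (c ^ 2 * r + c ^ 4 / 4) :=
    Real.le_sqrt_of_sq_le (by nlinarith [mul_nonneg (sq_nonneg c) hr])
  gcongr
  linarith

lemma inv_mul_sq_add_one_sub_symbolP_le (hc : c ≠ 0) (hr : 0 ≤ r) :
    (1 + r)⁻¹ * (r + 1 - symbolP c r) ^ 2 ≤ (c ^ 2)⁻¹ ^ 2 * (1 + r) ^ (3 : ℝ) := by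
  rw [Real.rpow_ofNat, inv_mul_le_iff₀ (by positivity)]
  calc (r + 1 - symbolP c r) ^ 2 ≤ (r ^ 2 / c ^ 2) ^ 2 :=
        pow_le_pow_left₀ (add_one_sub_symbolP_nonneg hc hr) (add_one_sub_symbolP_le hc hr) 2
    _ = (c ^ 2)⁻¹ ^ 2 * r ^ 4 := by ring
    _ ≤ (c ^ 2)⁻¹ ^ 2 * (1 + r) ^ 4 := by gcongr; linarith
    _ = (1 + r) * ((c ^ 2)⁻¹ ^ 2 * (1 + r) ^ 3) := by ring

end Symbol

lemma sqrt_integral_mul_sq_fourier_le_mul_sobolevNorm {n : ℕ} {s K : ℝ}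
    {u : EuclideanSpace ℝ (Fin n) → ℂ} {w : EuclideanSpace ℝ (Fin n) → ℝ}
    (hu : MemSobolev n s u) (hK : 0 ≤ K) (hw_nonneg : ∀ ξ, 0 ≤ w ξ)
    (hw_le : ∀ ξ, w ξ ≤ K ^ 2 * (1 + ‖ξ‖ ^ 2) ^ s) :
    Real.sqrt (((2 * Real.pi) ^ n)⁻¹ * ∫ ξ, w ξ * ‖𝓕 u ξ‖ ^ 2) ≤ K * sobolevNorm n s u := by
  have hint : ∫ ξ, w ξ * ‖𝓕 u ξ‖ ^ 2 ≤ K ^ 2 * ∫ ξ, (1 + ‖ξ‖ ^ 2) ^ s * ‖𝓕 u ξ‖ ^ 2 := by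
    rw [← integral_const_mul]
    refine integral_mono_of_nonneg (.of_forall fun ξ => by have := hw_nonneg ξ; positivity)
      (hu.const_mul _) (.of_forall fun ξ => ?_)
    simpa only [mul_assoc] using mul_le_mul_of_nonneg_right (hw_le ξ) (sq_nonneg ‖𝓕 u ξ‖)
  rw [sobolevNorm, ← Real.sqrt_sq hK, ← Real.sqrt_mul (sq_nonneg K)]
  refine Real.sqrt_le_sqrt ?_
  rw [mul_left_comm]
  exact mul_le_mul_of_nonneg_left hint (by positivity)

/-- If `u_c ∈ H³(ℝⁿ)` with `‖u_c‖_{H³} ≤ M` uniformly in `c ≥ 1`, then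
`‖(-Δ + 1 - P_c(D))u_c‖_{H^{-1}} ≤ C·M/c²` with `C` independent of `c ≥ 1`, the `H^{-1}` norm
of the multiplier being expressed on the Fourier side via Plancherel. -/
theorem multiplier_difference_Hminus1_estimate (n : ℕ) :
    ∃ C : ℝ, 0 < C ∧ ∀ c : ℝ, 1 ≤ c → ∀ M : ℝ, ∀ u : EuclideanSpace ℝ (Fin n) → ℂ,
      MemSobolev n 3 u → sobolevNorm n 3 u ≤ M →
      Real.sqrt (((2 * Real.pi) ^ n)⁻¹ *
          ∫ ξ : EuclideanSpace ℝ (Fin n),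
            (1 + ‖ξ‖ ^ 2)⁻¹ *
              (‖ξ‖ ^ 2 + 1 - (Real.sqrt (c ^ 2 * ‖ξ‖ ^ 2 + c ^ 4 / 4) - c ^ 2 / 2 + 1)) ^ 2 *
              ‖𝓕 u ξ‖ ^ 2)
        ≤ C * M / c ^ 2 := by
  refine ⟨1, one_pos, fun c hc M u hu hM => ?_⟩
  have hc0 : c ≠ 0 := by positivity
  calc _ ≤ (c ^ 2)⁻¹ * sobolevNorm n 3 u :=
        sqrt_integral_mul_sq_fourier_le_mul_sobolevNorm hu (by positivity)
          (fun ξ => by have := add_one_sub_symbolP_nonneg hc0 (sq_nonneg ‖ξ‖); positivity)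
          (fun ξ => inv_mul_sq_add_one_sub_symbolP_le hc0 (sq_nonneg ‖ξ‖))
    _ ≤ (c ^ 2)⁻¹ * M := by gcongr
    _ = 1 * M / c ^ 2 := by ring
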